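/- Let A₀ > 0 and let V : (A₀, ∞) → ℝ be convex and strictly increasing. Suppose: (i) for every Â > A₀ there exist δ > 0 and a continuously differentiable function f : (Â − δ, Â + δ) → ℝ with f ≤ V on (Â − δ, Â + δ), f(Â) = V(Â), f' > 0, the function A ↦ f'(A)^(−2) differentiable at Â, and (d/dA)[f'(A)^(−2)] at A = Â is ≤ −24π Â^(−2); and (ii) V'(A)^(−2) → 4 as A → ∞ along points of differentiability of V. Then for almost every A > A₀ (in particular at every point of differentiability of V that is also a Lebesgue point of V'^(−2)), one has V'(A)^(−2) ≥ 4 + 24π A^(−1). -/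

import Mathlib

/-!
Let `M` be the right derivative of `V` and `G = M⁻²`. Convexity makes `M` monotone, hence
differentiable almost everywhere; at such a point `x` it is continuous, so `V` is differentiable at
`x` and a barrier `f` touching `V` from below has `f'(x) = M(x)`. Comparing `f` with `V` to second
order on the right of `x` gives `f''(x) ≤ M'(x)`, that is `G'(x) ≤ (f'⁻²)'(x) ≤ -24π/x²`. As `M`
dominates `f' > 0`, `G` is antitone, and for an antitone function the integral of its a.e.
derivative underestimates the total decrease (a singular part only helps), so
`G(a) - G(b) ≥ 24π/a - 24π/b`. Letting `b → ∞` through points where `V` is differentiable,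
`G(b) → 4` yields `G(a) ≥ 4 + 24π/a` for every `a > A₀`, and `M(a) = V'(a)` wherever `V` is
differentiable.
-/

open Real Set Filter Topology MeasureTheory

noncomputable def rightDeriv (f : ℝ → ℝ) (x : ℝ) : ℝ := derivWithin f (Ioi x) x

theorem le_of_hasDerivWithinAt_Ici_of_eventuallyLE {f g : ℝ → ℝ} {a b x : ℝ}
    (hf : HasDerivWithinAt f a (Ici x) x) (hg : HasDerivWithinAt g b (Ici x) x)
    (hle : f ≤ᶠ[𝓝[>] x] g) (heq : f x = g x) : a ≤ b := by
  have h := (hasDerivWithinAt_iff_tendsto_slope' self_notMem_Ioi).1 (hg.sub hf).Ioi_of_Ici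
  rw [← sub_nonneg]
  refine ge_of_tendsto h ?_
  filter_upwards [hle, self_mem_nhdsWithin] with t ht (htx : x < t)
  rw [slope_def_field]
  exact div_nonneg (by simp [heq, ht]) (sub_nonneg.2 htx.le)

/-- If `m > q`, then `f' - g' ≥ r (t - x)` with `r > 0` just right of `x`, and the fencing
theorem makes `f - g` grow like `r (t - x)² / 2` there, contradicting `f ≤ g`. -/
theorem le_of_hasDerivWithinAt_Ici_of_le_of_tangent {f g f' g' : ℝ → ℝ} {x b m q : ℝ}
    (hxb : x < b) (hf : ContinuousOn f (Icc x b)) (hg : ContinuousOn g (Icc x b))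
    (hf' : ∀ t ∈ Ico x b, HasDerivWithinAt f (f' t) (Ici t) t)
    (hg' : ∀ t ∈ Ico x b, HasDerivWithinAt g (g' t) (Ici t) t)
    (hle : ∀ t ∈ Icc x b, f t ≤ g t) (heq : f x = g x) (h'eq : f' x = g' x)
    (hm : HasDerivWithinAt f' m (Ici x) x) (hq : HasDerivWithinAt g' q (Ici x) x) : m ≤ q := by
  by_contra! hqm
  set r := (m - q) / 2 with hr_def
  have hr : 0 < r := by linarith
  have hgrowth : ∀ᶠ t in 𝓝[>] x, r * (t - x) < f' t - g' t := by
    have h := (hasDerivWithinAt_iff_tendsto_slope' self_notMem_Ioi).1 (hm.sub hq).Ioi_of_Ici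
    filter_upwards [h (Ioi_mem_nhds (show r < m - q by linarith)), self_mem_nhdsWithin]
      with t ht (htx : x < t)
    rw [mem_preimage, slope_def_field, Pi.sub_apply, Pi.sub_apply, h'eq, sub_self, sub_zero,
      mem_Ioi, lt_div_iff₀ (sub_pos.2 htx)] at ht
    linarith
  obtain ⟨u, hxu, hu⟩ := mem_nhdsGT_iff_exists_Ioo_subset.1 hgrowth
  set c := min u b
  have hxc : x < c := lt_min hxu hxb
  have hcb : c ≤ b := min_le_right u b
  have hfence := image_le_of_deriv_right_le_deriv_boundary (f := fun t ↦ g t - f t)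
    (f' := fun t ↦ g' t - f' t) (B := fun t ↦ -(r / 2) * (t - x) ^ 2)
    (B' := fun t ↦ -(r * (t - x)))
    ((hg.sub hf).mono (Icc_subset_Icc_right hcb))
    (fun t ht ↦ (hg' t ⟨ht.1, ht.2.trans_le hcb⟩).sub (hf' t ⟨ht.1, ht.2.trans_le hcb⟩))
    (by simp [heq]) (by fun_prop)
    (fun t _ ↦ (((hasDerivAt_id t).sub_const x).pow 2 |>.const_mul (-(r / 2))
      |>.congr_deriv (by simp; ring)).hasDerivWithinAt)
    (fun t ht ↦ by
      rcases ht.1.eq_or_lt with rfl | hxt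
      · simp [h'eq]
      · have : r * (t - x) < f' t - g' t := hu ⟨hxt, ht.2.trans_le (min_le_left u b)⟩
        linarith)
    (right_mem_Icc.2 hxc.le)
  have hgap := hle c ⟨hxc.le, hcb⟩
  nlinarith [pow_pos (sub_pos.2 hxc) 2]

theorem hasDerivAt_of_hasDerivAt_inv_sq {u : ℝ → ℝ} {x D : ℝ} (hu : ∀ᶠ t in 𝓝 x, 0 < u t)
    (hD : HasDerivAt (fun t ↦ (u t ^ 2)⁻¹) D x) : HasDerivAt u (-(D * u x ^ 3) / 2) x := by
  have hsqrt : ∀ y : ℝ, 0 < y → √((y ^ 2)⁻¹) = y⁻¹ := fun y hy ↦ by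
    rw [Real.sqrt_inv, Real.sqrt_sq hy.le]
  have hux : 0 < u x := hu.self_of_nhds
  have h := (hD.sqrt (by positivity)).inv (by rw [hsqrt _ hux]; positivity)
  refine (h.congr_of_eventuallyEq ?_).congr_deriv ?_
  · filter_upwards [hu] with t ht
    simp only [Pi.inv_apply, hsqrt _ ht, inv_inv]
  · rw [hsqrt _ hux]
    field_simp

theorem MonotoneOn.intervalIntegral_le_sub_of_le_deriv {F ρ : ℝ → ℝ} {a b : ℝ} (hab : a ≤ b)
    (hF : MonotoneOn F (Icc a b)) (hρ : IntervalIntegrable ρ volume a b)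
    (h : ∀ᵐ x, x ∈ Ioo a b → ρ x ≤ deriv F x) : ∫ x in a..b, ρ x ≤ F b - F a := by
  have hFab : 0 ≤ F b - F a :=
    sub_nonneg.2 (hF (left_mem_Icc.2 hab) (right_mem_Icc.2 hab) hab)
  rw [← uIcc_of_le hab] at hF
  have hmem := hF.intervalIntegral_deriv_mem_uIcc
  rw [uIcc_of_le hFab] at hmem
  refine le_trans (intervalIntegral.integral_mono_ae_restrict hab hρ
    hF.intervalIntegrable_deriv ?_) hmem.2
  rw [← restrict_Ioo_eq_restrict_Icc]
  exact (ae_restrict_iff' measurableSet_Ioo).2 h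

theorem AntitoneOn.div_sub_div_le_sub_of_deriv_le {G : ℝ → ℝ} {κ a b : ℝ} (ha : 0 < a)
    (hab : a ≤ b) (hG : AntitoneOn G (Icc a b))
    (hG' : ∀ᵐ x, x ∈ Ioo a b → deriv G x ≤ -κ / x ^ 2) :
    κ / a - κ / b ≤ G a - G b := by
  have hpos : ∀ x ∈ uIcc a b, 0 < x := fun x hx ↦ ha.trans_le (uIcc_of_le hab ▸ hx).1
  have hprimitive : ∀ x ∈ uIcc a b, HasDerivAt (fun y ↦ -κ / y) (κ / x ^ 2) x := fun x hx ↦ by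
    simpa [div_eq_mul_inv] using (hasDerivAt_inv (hpos x hx).ne').const_mul (-κ)
  have hρ : IntervalIntegrable (fun x ↦ κ / x ^ 2) volume a b :=
    ContinuousOn.intervalIntegrable fun x hx ↦ (continuousAt_const.div (continuousAt_id.pow 2)
      (pow_ne_zero 2 (hpos x hx).ne')).continuousWithinAt
  have h := hG.neg.intervalIntegral_le_sub_of_le_deriv hab hρ (by
    filter_upwards [hG'] with x hx hmem
    rw [deriv.fun_neg]
    linarith [neg_div (x ^ 2) κ, hx hmem])
  rw [intervalIntegral.integral_eq_sub_of_hasDerivAt hprimitive hρ] at h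
  linarith [neg_div a κ, neg_div b κ]

theorem add_div_le_of_div_sub_div_le {G : ℝ → ℝ} {κ L a : ℝ}
    (hcomp : ∀ b > a, κ / a - κ / b ≤ G a - G b) (hL : ∀ ε > 0, ∀ B, ∃ b > B, L - ε < G b) :
    L + κ / a ≤ G a := by
  refine le_of_forall_pos_lt_add fun ε hε ↦ ?_
  have hκ : Tendsto (fun b : ℝ ↦ κ / b) atTop (𝓝 0) := tendsto_const_nhds.div_atTop tendsto_id
  obtain ⟨B, hB⟩ := eventually_atTop.1 (hκ.eventually (gt_mem_nhds (half_pos hε)))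
  obtain ⟨b, hb, hGb⟩ := hL (ε / 2) (half_pos hε) (max a B)
  have := hcomp b ((le_max_left a B).trans_lt hb)
  have := hB b ((le_max_right a B).trans hb.le)
  linarith

section ConvexOn

variable {S : Set ℝ} {V : ℝ → ℝ} {x : ℝ}

theorem ConvexOn.hasDerivAt_of_continuousWithinAt_rightDeriv (hV : ConvexOn ℝ S V)
    (hx : x ∈ interior S) (hM : ContinuousWithinAt (rightDeriv V) (Iio x) x) :
    HasDerivAt V (rightDeriv V x) x := by
  have hleft := hV.hasDerivWithinAt_leftDeriv_of_mem_interior hx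
  have hright : rightDeriv V x ≤ derivWithin V (Iio x) x := by
    refine le_of_tendsto hM ?_
    filter_upwards [nhdsWithin_le_nhds (isOpen_interior.mem_nhds hx), self_mem_nhdsWithin]
      with t ht (htx : t < x)
    exact (hV.rightDeriv_le_slope_of_mem_interior ht (interior_subset hx) htx).trans
      (hV.slope_le_leftDeriv_of_mem_interior (interior_subset ht) hx htx)
  rw [le_antisymm (hV.leftDeriv_le_rightDeriv_of_mem_interior hx) hright] at hleft
  have h := hleft.Iic_of_Iio.union (hV.hasDerivWithinAt_rightDeriv_of_mem_interior hx).Ici_of_Ioi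
  rwa [Iic_union_Ici, hasDerivWithinAt_univ] at h

theorem ConvexOn.le_rightDeriv_of_eventuallyLE (hV : ConvexOn ℝ S V) (hx : x ∈ interior S)
    {f : ℝ → ℝ} {a : ℝ} (hf : HasDerivAt f a x) (hle : f ≤ᶠ[𝓝[>] x] V) (heq : f x = V x) :
    a ≤ rightDeriv V x :=
  le_of_hasDerivWithinAt_Ici_of_eventuallyLE hf.hasDerivWithinAt
    (hV.hasDerivWithinAt_rightDeriv_of_mem_interior hx).Ici_of_Ioi hle heq

theorem ConvexOn.deriv_inv_sq_rightDeriv_le (hV : ConvexOn ℝ S V) (hx : x ∈ interior S)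
    (hM : DifferentiableAt ℝ (rightDeriv V) x) {f f' : ℝ → ℝ} {D : ℝ}
    (hf : ∀ᶠ t in 𝓝 x, HasDerivAt f (f' t) t) (hle : f ≤ᶠ[𝓝 x] V) (heq : f x = V x)
    (hf'pos : ∀ᶠ t in 𝓝 x, 0 < f' t) (hD : HasDerivAt (fun t ↦ (f' t ^ 2)⁻¹) D x) :
    deriv (fun t ↦ (rightDeriv V t ^ 2)⁻¹) x ≤ D := by
  have hVx := hV.hasDerivAt_of_continuousWithinAt_rightDeriv hx hM.continuousAt.continuousWithinAt
  have hslope : f' x = rightDeriv V x := by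
    have hmax : IsLocalMax (fun t ↦ f t - V t) x := by
      filter_upwards [hle] with t ht
      simp only [heq, sub_self, sub_nonpos, ht]
    exact sub_eq_zero.1 (hmax.hasDerivAt_eq_zero (hf.self_of_nhds.sub hVx))
  have hp : 0 < f' x := hf'pos.self_of_nhds
  have hmq : -(D * f' x ^ 3) / 2 ≤ deriv (rightDeriv V) x := by
    obtain ⟨l, u, hxlu, hsub⟩ := mem_nhds_iff_exists_Ioo_subset.1
      (hf.and (hle.and (isOpen_interior.mem_nhds hx)))
    have hmem : ∀ t ∈ Icc x ((x + u) / 2),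
        HasDerivAt f (f' t) t ∧ f t ≤ V t ∧ t ∈ interior S :=
      fun t ht ↦ hsub (Icc_subset_Ioo hxlu.1 (by linarith [hxlu.2]) ht)
    exact le_of_hasDerivWithinAt_Ici_of_le_of_tangent (by linarith [hxlu.2])
      (fun t ht ↦ (hmem t ht).1.continuousAt.continuousWithinAt)
      (hV.continuousOn_interior.mono fun t ht ↦ (hmem t ht).2.2)
      (fun t ht ↦ (hmem t (Ico_subset_Icc_self ht)).1.hasDerivWithinAt)
      (fun t ht ↦ (hV.hasDerivWithinAt_rightDeriv_of_mem_interior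
        (hmem t (Ico_subset_Icc_self ht)).2.2).Ici_of_Ioi)
      (fun t ht ↦ (hmem t ht).2.1) heq hslope
      (hasDerivAt_of_hasDerivAt_inv_sq hf'pos hD).hasDerivWithinAt hM.hasDerivAt.hasDerivWithinAt
  have hG : HasDerivAt (fun t ↦ (rightDeriv V t ^ 2)⁻¹) _ x :=
    (hM.hasDerivAt.pow 2).inv (pow_ne_zero 2 (hslope ▸ hp).ne')
  rw [hG.deriv, Pi.pow_apply, ← hslope, div_le_iff₀ (by positivity)]
  norm_num
  nlinarith [mul_le_mul_of_nonneg_left hmq (by positivity : (0 : ℝ) ≤ 2 * f' x)]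

theorem ConvexOn.ae_differentiableAt_rightDeriv (hV : ConvexOn ℝ S V) :
    ∀ᵐ x, x ∈ interior S → DifferentiableAt ℝ (rightDeriv V) x := by
  filter_upwards [hV.monotoneOn_rightDeriv.ae_differentiableWithinAt_of_mem] with x hx hxS
  exact (hx hxS).differentiableAt (isOpen_interior.mem_nhds hxS)

theorem ConvexOn.exists_gt_hasDerivAt_rightDeriv {A₀ : ℝ} (hV : ConvexOn ℝ (Ioi A₀) V)
    (c : ℝ) : ∃ b > c, HasDerivAt V (rightDeriv V b) b := by
  have hdiff := hV.ae_differentiableAt_rightDeriv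
  rw [interior_Ioi] at hdiff
  obtain ⟨b, hb, hMb⟩ := Measure.exists_mem_of_measure_ne_zero_of_ae (μ := volume)
    (s := Ioi (max A₀ c)) (by simp)
    ((ae_restrict_iff' measurableSet_Ioi).2 (hdiff.mono fun _ h _ ↦ h))
  refine ⟨b, (le_max_right _ _).trans_lt hb, ?_⟩
  have hA₀b : A₀ < b := (le_max_left _ _).trans_lt hb
  exact hV.hasDerivAt_of_continuousWithinAt_rightDeriv (by rwa [interior_Ioi])
    (hMb hA₀b).continuousAt.continuousWithinAt

theorem ConvexOn.div_sub_div_le_inv_sq_rightDeriv_sub {A₀ κ a b : ℝ} (hA₀ : 0 ≤ A₀)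
    (hV : ConvexOn ℝ (Ioi A₀) V) (hpos : ∀ x, A₀ < x → 0 < rightDeriv V x)
    (hderiv : ∀ᵐ x, A₀ < x → deriv (fun t ↦ (rightDeriv V t ^ 2)⁻¹) x ≤ -κ / x ^ 2)
    (ha : A₀ < a) (hab : a ≤ b) :
    κ / a - κ / b ≤ (rightDeriv V a ^ 2)⁻¹ - (rightDeriv V b ^ 2)⁻¹ := by
  have hmono : MonotoneOn (rightDeriv V) (Ioi A₀) := by
    have h := hV.monotoneOn_rightDeriv
    rwa [interior_Ioi] at h
  have hanti : AntitoneOn (fun t ↦ (rightDeriv V t ^ 2)⁻¹) (Icc a b) :=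
    fun s hs t ht hst ↦ inv_anti₀ (pow_pos (hpos s (ha.trans_le hs.1)) 2)
      (pow_le_pow_left₀ (hpos s (ha.trans_le hs.1)).le
        (hmono (ha.trans_le hs.1) (ha.trans_le ht.1) hst) 2)
  refine hanti.div_sub_div_le_sub_of_deriv_le (hA₀.trans_lt ha) hab ?_
  filter_upwards [hderiv] with x hx hxab using hx (ha.trans hxab.1)

end ConvexOn

theorem barrier_differential_inequality_integration (A₀ : ℝ) (hA₀ : 0 < A₀)
    (V : ℝ → ℝ)
    (hconv : ConvexOn ℝ (Set.Ioi A₀) V)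
    (hbarrier : ∀ Ahat : ℝ, A₀ < Ahat → ∃ δ > (0:ℝ), ∃ f f' : ℝ → ℝ,
      (∀ x ∈ Set.Ioo (Ahat - δ) (Ahat + δ), HasDerivAt f (f' x) x) ∧
      ContinuousOn f' (Set.Ioo (Ahat - δ) (Ahat + δ)) ∧
      (∀ x ∈ Set.Ioo (Ahat - δ) (Ahat + δ), f x ≤ V x) ∧
      f Ahat = V Ahat ∧
      (∀ x ∈ Set.Ioo (Ahat - δ) (Ahat + δ), 0 < f' x) ∧
      ∃ D : ℝ, HasDerivAt (fun x => ((f' x) ^ 2)⁻¹) D Ahat ∧ D ≤ -24 * π / Ahat ^ 2)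
    (hlim : ∀ ε > (0:ℝ), ∃ B : ℝ, ∀ A ≥ B, DifferentiableAt ℝ V A →
      |((deriv V A) ^ 2)⁻¹ - 4| < ε) :
    ∀ᵐ A ∂(volume : Measure ℝ), A₀ < A → DifferentiableAt ℝ V A →
      4 + 24 * π / A ≤ ((deriv V A) ^ 2)⁻¹ := by
  have hinterior : ∀ {x}, A₀ < x → x ∈ interior (Ioi A₀) := fun hx ↦ by rwa [interior_Ioi]
  have hpos : ∀ x, A₀ < x → 0 < rightDeriv V x := fun x hx ↦ by
    obtain ⟨δ, hδ, f, f', hf, -, hle, heq, hf'pos, -⟩ := hbarrier x hx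
    have hU : Ioo (x - δ) (x + δ) ∈ 𝓝 x := Ioo_mem_nhds (by linarith) (by linarith)
    exact (hf'pos x (mem_of_mem_nhds hU)).trans_le <| hconv.le_rightDeriv_of_eventuallyLE
      (hinterior hx) (hf x (mem_of_mem_nhds hU))
      (nhdsWithin_le_nhds (eventually_of_mem hU hle)) heq
  have hderiv : ∀ᵐ x, A₀ < x →
      deriv (fun t ↦ (rightDeriv V t ^ 2)⁻¹) x ≤ -(24 * π) / x ^ 2 := by
    filter_upwards [hconv.ae_differentiableAt_rightDeriv] with x hMx hx
    obtain ⟨δ, hδ, f, f', hf, -, hle, heq, hf'pos, D, hD, hDle⟩ := hbarrier x hx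
    have hU : Ioo (x - δ) (x + δ) ∈ 𝓝 x := Ioo_mem_nhds (by linarith) (by linarith)
    exact (hconv.deriv_inv_sq_rightDeriv_le (hinterior hx) (hMx (hinterior hx))
      (eventually_of_mem hU hf) (eventually_of_mem hU hle) heq (eventually_of_mem hU hf'pos)
      hD).trans (neg_mul 24 π ▸ hDle)
  refine ae_of_all _ fun A hA hVA ↦ ?_
  rw [← hVA.hasDerivAt.hasDerivWithinAt.derivWithin (uniqueDiffWithinAt_Ioi A)]
  refine add_div_le_of_div_sub_div_le (G := fun t ↦ (rightDeriv V t ^ 2)⁻¹) (fun b hb ↦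
    hconv.div_sub_div_le_inv_sq_rightDeriv_sub hA₀.le hpos hderiv hA hb.le) fun ε hε B ↦ ?_
  obtain ⟨B', hB'⟩ := hlim ε hε
  obtain ⟨b, hb, hVb⟩ := hconv.exists_gt_hasDerivAt_rightDeriv (max B B')
  have h4 := hB' b ((le_max_right _ _).trans hb.le) hVb.differentiableAt
  rw [hVb.deriv] at h4
  exact ⟨b, (le_max_left _ _).trans_lt hb, by linarith [(abs_lt.1 h4).1]⟩
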